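/- For every t > 0 the series V_eff(t) = Σ_{k=1}^∞ V(kt) converges, the function V_eff is differentiable on (0,∞), and its derivative is V_eff'(t) = Σ_{k=1}^∞ k·V'(kt) = −Σ_{k=1}^∞ k·φ(kt) = −φ_eff(t). -/

import Mathlib

open Real

/-- The wall-interaction energy `V(s) = (1/π)·s·coth(πs) − (1/π²)·log(2·sinh(πs))`. -/
noncomputable def V (s : ℝ) : ℝ :=
  (1 / Real.pi) * s * (Real.cosh (Real.pi * s) / Real.sinh (Real.pi * s))
    - (1 / Real.pi ^ 2) * Real.log (2 * Real.sinh (Real.pi * s))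

/-- The wall-interaction force `φ(s) = s / sinh²(πs) = −V'(s)`. -/
noncomputable def phi (s : ℝ) : ℝ := s / (Real.sinh (Real.pi * s)) ^ 2

/-! With `E = exp (-2πs)` one has `V s = (2s/π)·E/(1-E) - log(1-E)/π²` and `φ s = 4sE/(1-E)²`, so
both `V` and `φ` decay like `s·exp(-2πs)`. Hence `∑ V(kt)` converges, and `∑ k·φ(kx)` is dominated by a
convergent series uniformly for `x` near `t`, which allows termwise differentiation with `V' = -φ`. -/

lemma two_mul_sinh_eq_exp_mul (x : ℝ) : 2 * sinh x = exp x * (1 - exp (-(2 * x))) := by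
  have h : exp x * exp (-(2 * x)) = exp (-x) := by rw [← exp_add]; ring_nf
  rw [sinh_eq]; linear_combination h

lemma two_mul_cosh_eq_exp_mul (x : ℝ) : 2 * cosh x = exp x * (1 + exp (-(2 * x))) := by
  have h : exp x * exp (-(2 * x)) = exp (-x) := by rw [← exp_add]; ring_nf
  rw [cosh_eq]; linear_combination -h

lemma phi_eq (s : ℝ) :
    phi s = 4 * s * exp (-(2 * π * s)) / (1 - exp (-(2 * π * s))) ^ 2 := by
  have h2 := two_mul_sinh_eq_exp_mul (π * s)
  have hsq : sinh (π * s) ^ 2 = exp (2 * π * s) * (1 - exp (-(2 * π * s))) ^ 2 / 4 := by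
    have : exp (2 * π * s) = exp (π * s) ^ 2 := by rw [← exp_nat_mul]; ring_nf
    rw [this, ← mul_pow, show 2 * π * s = 2 * (π * s) by ring, ← h2]; ring
  rw [phi, hsq, exp_neg]
  field_simp

lemma V_eq {s : ℝ} (hs : 0 < s) :
    V s = 2 * s / π * (exp (-(2 * π * s)) / (1 - exp (-(2 * π * s))))
      - log (1 - exp (-(2 * π * s))) / π ^ 2 := by
  have hE : exp (-(2 * π * s)) < 1 := exp_lt_one_iff.2 (neg_lt_zero.2 (by positivity))
  have hsinh := two_mul_sinh_eq_exp_mul (π * s)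
  have hcosh := two_mul_cosh_eq_exp_mul (π * s)
  rw [show 2 * (π * s) = 2 * π * s by ring] at hsinh hcosh
  have hcoth : cosh (π * s) / sinh (π * s) =
      (1 + exp (-(2 * π * s))) / (1 - exp (-(2 * π * s))) := by
    rw [← mul_div_mul_left _ _ (two_ne_zero' ℝ), hsinh, hcosh,
      mul_div_mul_left _ _ (exp_ne_zero _)]
  have hlog : log (2 * sinh (π * s)) = π * s + log (1 - exp (-(2 * π * s))) := by
    rw [hsinh, log_mul (exp_ne_zero _) (by linarith), log_exp]
  have hE' : 1 - exp (-(2 * π * s)) ≠ 0 := by linarith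
  rw [V, hcoth, hlog]
  generalize exp (-(2 * π * s)) = E at hE' ⊢
  field_simp
  ring

lemma hasDerivAt_V {s : ℝ} (hs : 0 < s) : HasDerivAt V (-phi s) s := by
  have hsinh : 0 < sinh (π * s) := sinh_pos_iff.2 (by positivity)
  have hlin : HasDerivAt (fun x => π * x) π s := by
    simpa using (hasDerivAt_id s).const_mul π
  have hcoth := ((hasDerivAt_cosh _).comp s hlin).div ((hasDerivAt_sinh _).comp s hlin) hsinh.ne'
  have hlog := (((hasDerivAt_sinh _).comp s hlin).const_mul 2).log (by positivity)
  refine HasDerivAt.congr_deriv (f := V)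
    ((((hasDerivAt_id s).const_mul (1 / π)).mul hcoth).sub (hlog.const_mul (1 / π ^ 2))) ?_
  simp only [phi, Pi.div_apply, Function.comp_apply, id]
  field_simp
  linear_combination -(π * s) * cosh_sq (π * s)

lemma hasDerivAt_V_comp_mul {c x : ℝ} (hcx : 0 < c * x) :
    HasDerivAt (fun u => V (c * u)) (-(c * phi (c * x))) x := by
  have h := (hasDerivAt_V hcx).comp x ((hasDerivAt_id' x).const_mul c)
  rw [mul_one, neg_mul, mul_comm] at h
  exact h

lemma neg_log_one_sub_le {x : ℝ} (hx : x < 1) : -log (1 - x) ≤ x / (1 - x) := by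
  have h := log_le_sub_one_of_pos (inv_pos.2 (sub_pos.2 hx))
  rw [log_inv] at h
  convert h using 1
  field_simp [(sub_pos.2 hx).ne']
  ring

lemma V_nonneg {s : ℝ} (hs : 0 < s) : 0 ≤ V s := by
  have hE : exp (-(2 * π * s)) < 1 := exp_lt_one_iff.2 (neg_lt_zero.2 (by positivity))
  have hlog : log (1 - exp (-(2 * π * s))) ≤ 0 :=
    log_nonpos (by linarith) (by linarith [exp_pos (-(2 * π * s))])
  rw [V_eq hs, sub_eq_add_neg, ← neg_div]
  exact add_nonneg (mul_nonneg (by positivity) (div_nonneg (exp_pos _).le (by linarith)))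
    (div_nonneg (by linarith) (by positivity))

section ExponentialDecay

variable {m s : ℝ} (hm : 0 < m) (hms : m ≤ s)
include hm hms

lemma V_le_mul_exp :
    V s ≤ (2 * s / π + 1 / π ^ 2) / (1 - exp (-(2 * π * m))) * exp (-(2 * π * s)) := by
  have hs : 0 < s := hm.trans_le hms
  have hq : exp (-(2 * π * m)) < 1 := exp_lt_one_iff.2 (neg_lt_zero.2 (by positivity))
  have hEq : exp (-(2 * π * s)) ≤ exp (-(2 * π * m)) :=
    exp_le_exp.2 (by nlinarith [pi_pos])
  have hlog := neg_log_one_sub_le (hEq.trans_lt hq)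
  calc V s ≤ (2 * s / π + 1 / π ^ 2) * (exp (-(2 * π * s)) / (1 - exp (-(2 * π * s)))) := by
        rw [V_eq hs, add_mul, one_div_mul_eq_div, sub_eq_add_neg, ← neg_div]
        gcongr
    _ ≤ (2 * s / π + 1 / π ^ 2) * (exp (-(2 * π * s)) / (1 - exp (-(2 * π * m)))) := by
        gcongr
    _ = _ := by ring

lemma phi_le_mul_exp :
    phi s ≤ 4 / (1 - exp (-(2 * π * m))) ^ 2 * (s * exp (-(2 * π * s))) := by
  have hs : 0 < s := hm.trans_le hms
  have hq : exp (-(2 * π * m)) < 1 := exp_lt_one_iff.2 (neg_lt_zero.2 (by positivity))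
  have hEq : exp (-(2 * π * s)) ≤ exp (-(2 * π * m)) :=
    exp_le_exp.2 (by nlinarith [pi_pos])
  calc phi s = 4 * s * exp (-(2 * π * s)) / (1 - exp (-(2 * π * s))) ^ 2 := phi_eq s
    _ ≤ 4 * s * exp (-(2 * π * s)) / (1 - exp (-(2 * π * m))) ^ 2 := by
        gcongr
    _ = _ := by ring

end ExponentialDecay

lemma summable_succ_pow_mul_exp_neg {c : ℝ} (hc : 0 < c) (p : ℕ) :
    Summable fun k : ℕ => ((k : ℝ) + 1) ^ p * exp (-(c * ((k : ℝ) + 1))) := by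
  have := (summable_nat_add_iff 1).2 (Real.summable_pow_mul_exp_neg_nat_mul p hc)
  simpa [neg_mul] using this

section Series

variable {t : ℝ} (ht : 0 < t)
include ht

lemma V_succ_mul_le (k : ℕ) :
    V ((k + 1) * t) ≤ (2 * t / π + 1 / π ^ 2) / (1 - exp (-(2 * π * t))) *
      (((k : ℝ) + 1) ^ 1 * exp (-(2 * π * t * ((k : ℝ) + 1)))) := by
  have hk : (1 : ℝ) ≤ k + 1 := le_add_of_nonneg_left k.cast_nonneg
  have hq : exp (-(2 * π * t)) < 1 := exp_lt_one_iff.2 (neg_lt_zero.2 (by positivity))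
  calc V ((k + 1) * t)
      ≤ (2 * ((k + 1) * t) / π + 1 / π ^ 2) / (1 - exp (-(2 * π * t))) *
          exp (-(2 * π * ((k + 1) * t))) := V_le_mul_exp ht (le_mul_of_one_le_left ht.le hk)
    _ ≤ (k + 1) * (2 * t / π + 1 / π ^ 2) / (1 - exp (-(2 * π * t))) *
          exp (-(2 * π * ((k + 1) * t))) := by
        have : 1 / π ^ 2 ≤ (k + 1) * (1 / π ^ 2) := le_mul_of_one_le_left (by positivity) hk
        gcongr
        rw [mul_add, show 2 * ((k + 1) * t) / π = (k + 1) * (2 * t / π) by ring]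
        linarith
    _ = _ := by ring_nf

lemma summable_V_succ_mul : Summable fun k : ℕ => V ((k + 1) * t) :=
  .of_nonneg_of_le (fun k => V_nonneg (by positivity)) (V_succ_mul_le ht)
    ((summable_succ_pow_mul_exp_neg (by positivity) 1).mul_left _)

variable {x : ℝ} (hx : x ∈ Set.Ioo (t / 2) (2 * t))
include hx

lemma norm_succ_mul_phi_le (k : ℕ) :
    ‖((k : ℝ) + 1) * phi ((k + 1) * x)‖ ≤ 8 * t / (1 - exp (-(π * t))) ^ 2 *
      (((k : ℝ) + 1) ^ 2 * exp (-(π * t * ((k : ℝ) + 1)))) := by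
  have hk : (1 : ℝ) ≤ k + 1 := le_add_of_nonneg_left k.cast_nonneg
  have hx0 : 0 < x := by linarith [hx.1]
  have h := phi_le_mul_exp (half_pos ht) (by nlinarith [hx.1] : t / 2 ≤ (k + 1) * x)
  rw [show 2 * π * (t / 2) = π * t by ring] at h
  have hnonneg : 0 ≤ phi ((k + 1) * x) := div_nonneg (by positivity) (sq_nonneg _)
  rw [Real.norm_of_nonneg (by positivity)]
  calc ((k : ℝ) + 1) * phi ((k + 1) * x)
      ≤ (k + 1) * (4 / (1 - exp (-(π * t))) ^ 2 *
          ((k + 1) * x * exp (-(2 * π * ((k + 1) * x))))) := by gcongr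
    _ ≤ (k + 1) * (4 / (1 - exp (-(π * t))) ^ 2 *
          ((k + 1) * (2 * t) * exp (-(π * t * (k + 1))))) := by
        have hlin : (k + 1) * x ≤ (k + 1) * (2 * t) := by gcongr; exact hx.2.le
        have hexp : exp (-(2 * π * ((k + 1) * x))) ≤ exp (-(π * t * (k + 1))) :=
          exp_le_exp.2 <| by
            nlinarith [mul_le_mul_of_nonneg_left (by linarith [hx.1] : t ≤ 2 * x)
              (by positivity : 0 ≤ π * (k + 1))]
        gcongr (k + 1) * (_ * (?_ * ?_))
    _ = _ := by ring

end Series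

/-- For every `t > 0` the series `V_eff(t) = Σ_{k=1}^∞ V(kt)` converges, the series
`φ_eff(t) = Σ_{k=1}^∞ k·φ(kt)` converges, and `V_eff` is differentiable at `t` with
derivative `V_eff'(t) = Σ_{k=1}^∞ k·V'(kt) = −φ_eff(t)`. -/
theorem stmt11 : ∀ t : ℝ, 0 < t →
    Summable (fun k : ℕ => V (((k : ℝ) + 1) * t)) ∧
    Summable (fun k : ℕ => ((k : ℝ) + 1) * phi (((k : ℝ) + 1) * t)) ∧
    HasDerivAt (fun u : ℝ => ∑' k : ℕ, V (((k : ℝ) + 1) * u))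
      (-(∑' k : ℕ, ((k : ℝ) + 1) * phi (((k : ℝ) + 1) * t))) t := by
  intro t ht
  have hu := (summable_succ_pow_mul_exp_neg (mul_pos pi_pos ht) 2).mul_left
    (8 * t / (1 - exp (-(π * t))) ^ 2)
  have htI : t ∈ Set.Ioo (t / 2) (2 * t) := ⟨by linarith, by linarith⟩
  have hderiv := hasDerivAt_tsum_of_isPreconnected hu isOpen_Ioo isPreconnected_Ioo
    (fun k x hx => hasDerivAt_V_comp_mul (mul_pos k.cast_add_one_pos (by linarith [hx.1])))
    (fun k x hx => (norm_neg _).trans_le (norm_succ_mul_phi_le ht hx k))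
    htI (summable_V_succ_mul ht) htI
  refine ⟨summable_V_succ_mul ht, .of_norm_bounded hu (norm_succ_mul_phi_le ht htI), ?_⟩
  rwa [tsum_neg] at hderiv
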